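/- arXiv:1805.10088 — 6 statements merged into one kernel-verified Lean document; each statement's English description precedes it below -/
import Mathlib

section
/- Let L be a Lie algebra over a commutative ring, and let a, b, x ∈ L satisfy [b, x] = 0 and [[b, a], a] = 0. Setting y := [a, x], one has [b, [a, y]] = 2 • [a, [b, y]]. -/
theorem stmt0 {R L : Type*} [CommRing R] [LieRing L] [LieAlgebra R L]
    (a b x : L) (h1 : ⁅b, x⁆ = 0) (h2 : ⁅⁅b, a⁆, a⁆ = 0) :
    ⁅b, ⁅a, ⁅a, x⁆⁆⁆ = 2 • ⁅a, ⁅b, ⁅a, x⁆⁆⁆ := by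
  have e1 : ⁅b, ⁅a, x⁆⁆ = ⁅⁅b, a⁆, x⁆ := by rw [leibniz_lie, h1, lie_zero, add_zero]
  have e2 : ⁅⁅b, a⁆, ⁅a, x⁆⁆ = ⁅a, ⁅⁅b, a⁆, x⁆⁆ := by
    rw [leibniz_lie, h2, zero_lie, zero_add]
  rw [leibniz_lie, e1, e2, two_smul]
end

section
/- Let L be a Lie algebra over ℝ and let x, y, tx, ty ∈ L satisfy [x, y] = 0, [tx, y] = [x, ty], [[tx, x], y] = 4 • y, and [[ty, y], x] = 4 • x. Then [[tx, y], x] = 4 • y and [[tx, y], y] = −4 • x; consequently, for J := ad([tx, y]), one has J(J x) = −16 • x and J(J y) = −16 • y. -/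
theorem stmt1 {L : Type*} [LieRing L] [LieAlgebra ℝ L]
    (x y tx ty : L) (h1 : ⁅x, y⁆ = 0) (h2 : ⁅tx, y⁆ = ⁅x, ty⁆)
    (h3 : ⁅⁅tx, x⁆, y⁆ = 4 • y) (h4 : ⁅⁅ty, y⁆, x⁆ = 4 • x) :
    ⁅⁅tx, y⁆, x⁆ = 4 • y ∧ ⁅⁅tx, y⁆, y⁆ = -(4 • x) ∧
    ⁅⁅tx, y⁆, ⁅⁅tx, y⁆, x⁆⁆ = -(16 • x) ∧ ⁅⁅tx, y⁆, ⁅⁅tx, y⁆, y⁆⁆ = -(16 • y) := by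
  have hyx : ⁅y, x⁆ = 0 := by rw [← lie_skew, h1, neg_zero]
  have a1 : ⁅⁅tx, y⁆, x⁆ = 4 • y := by
    rw [lie_lie, hyx, lie_zero, zero_sub, ← lie_skew, neg_neg, h3]
  have a2 : ⁅⁅tx, y⁆, y⁆ = -(4 • x) := by
    rw [h2, lie_lie, h1, lie_zero, sub_zero, ← lie_skew, h4]
  refine ⟨a1, a2, ?_, ?_⟩
  · rw [a1, ← Nat.cast_smul_eq_nsmul ℝ 4 y, lie_smul, a2, smul_neg,
      ← Nat.cast_smul_eq_nsmul ℝ 4 x, smul_smul, ← Nat.cast_smul_eq_nsmul ℝ 16 x]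
    norm_num
  · rw [a2, lie_neg, ← Nat.cast_smul_eq_nsmul ℝ 4 x, lie_smul, a1,
      ← Nat.cast_smul_eq_nsmul ℝ 4 y, smul_smul, ← Nat.cast_smul_eq_nsmul ℝ 16 y]
    norm_num
end

section
/- Let L be a Lie algebra over a field of characteristic ≠ 2, and let x, y, z, tx, ty, tz ∈ L satisfy [x, y] = 0, [y, z] = 0, [z, x] = 0, [tx, y] = [x, ty], [ty, z] = [y, tz], and [tz, x] = [z, tx]. Then [[tx, y], z] = 0. -/
theorem stmt2 {K L : Type*} [Field K] [LieRing L] [LieAlgebra K L]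
    (hchar : (2 : K) ≠ 0)
    (x y z tx ty tz : L)
    (hxy : ⁅x, y⁆ = 0) (hyz : ⁅y, z⁆ = 0) (hzx : ⁅z, x⁆ = 0)
    (h1 : ⁅tx, y⁆ = ⁅x, ty⁆) (h2 : ⁅ty, z⁆ = ⁅y, tz⁆) (h3 : ⁅tz, x⁆ = ⁅z, tx⁆) :
    ⁅⁅tx, y⁆, z⁆ = 0 := by
  have hyx : ⁅y, x⁆ = 0 := by rw [← lie_skew, hxy, neg_zero]
  have e1 : ⁅⁅tx, y⁆, z⁆ = ⁅y, ⁅tz, x⁆⁆ := by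
    rw [lie_lie, hyz, lie_zero, zero_sub, h3]
    have htxz : ⁅tx, z⁆ = -⁅z, tx⁆ := by rw [← lie_skew]
    rw [htxz, lie_neg, neg_neg]
  have e2 : ⁅y, ⁅tz, x⁆⁆ = ⁅⁅ty, z⁆, x⁆ := by
    rw [leibniz_lie y tz x, hyx, lie_zero, add_zero, ← h2]
  have e3 : ⁅⁅ty, z⁆, x⁆ = -⁅⁅tx, y⁆, z⁆ := by
    rw [lie_lie, hzx, lie_zero, zero_sub, h1]
    have htyx : ⁅ty, x⁆ = -⁅x, ty⁆ := by rw [← lie_skew]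
    rw [htyx, lie_neg, neg_neg, ← lie_skew z]
  have key : ⁅⁅tx, y⁆, z⁆ = -⁅⁅tx, y⁆, z⁆ := e1.trans (e2.trans e3)
  have h2a : (2 : K) • ⁅⁅tx, y⁆, z⁆ = 0 := by
    have hns : ((2 : ℕ) : K) • ⁅⁅tx, y⁆, z⁆ = (2 : ℕ) • ⁅⁅tx, y⁆, z⁆ :=
      Nat.cast_smul_eq_nsmul K 2 _
    rw [show ((2:ℕ):K) = (2:K) by norm_num] at hns
    rw [hns, two_nsmul]
    nth_rewrite 1 [key]
    rw [neg_add_cancel]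
  simpa [smul_eq_zero, hchar] using h2a
end

section
/- Let L be a Lie algebra over a commutative ring and let t, s, x ∈ L and scalars c, c', c'' satisfy [t, x] = 0, [[t, s], x] = c • x, [[t, s], [s, x]] = c' • [s, x], and [[t, s], [s, [s, x]]] = c'' • [s, [s, x]]. Then [t, [s, [s, [s, x]]]] = (c + c' + c'') • [s, [s, x]]. -/
theorem stmt5 {R L : Type*} [CommRing R] [LieRing L] [LieAlgebra R L]
    (t s x : L) (c c' c'' : R) (h1 : ⁅t, x⁆ = 0) (h2 : ⁅⁅t, s⁆, x⁆ = c • x)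
    (h3 : ⁅⁅t, s⁆, ⁅s, x⁆⁆ = c' • ⁅s, x⁆)
    (h4 : ⁅⁅t, s⁆, ⁅s, ⁅s, x⁆⁆⁆ = c'' • ⁅s, ⁅s, x⁆⁆) :
    ⁅t, ⁅s, ⁅s, ⁅s, x⁆⁆⁆⁆ = (c + c' + c'') • ⁅s, ⁅s, x⁆⁆ := by
  have k1 : ⁅t, ⁅s, x⁆⁆ = c • x := by
    rw [leibniz_lie, h2, h1, lie_zero, add_zero]
  have k2 : ⁅t, ⁅s, ⁅s, x⁆⁆⁆ = (c + c') • ⁅s, x⁆ := by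
    rw [leibniz_lie, h3, k1, lie_smul, add_smul, add_comm]
  rw [leibniz_lie, h4, k2, lie_smul, ← add_smul]
  ring_nf
end

section
/- For every φ ∈ ℝ, the real 4×4 matrix M(φ) = !![0, cos φ, sin φ, 0; cos φ, 0, 0, sin φ; sin φ, 0, 0, cos φ; 0, sin φ, cos φ, 0] has characteristic polynomial (X² − (1 + sin 2φ))(X² − (1 − sin 2φ)); in particular its eigenvalues are ±(cos φ + sin φ) and ±(cos φ − sin φ), which depend non-trivially on φ. -/
open Polynomial Real

noncomputable def M15 (φ : ℝ) : Matrix (Fin 4) (Fin 4) ℝ :=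
  !![0, cos φ, sin φ, 0;
     cos φ, 0, 0, sin φ;
     sin φ, 0, 0, cos φ;
     0, sin φ, cos φ, 0]

open Matrix in
lemma mem_spectrum_iff_charpoly_eval (M : Matrix (Fin 4) (Fin 4) ℝ) (μ : ℝ) :
    μ ∈ spectrum ℝ M ↔ M.charpoly.eval μ = 0 := by
  rw [spectrum.mem_iff, Matrix.isUnit_iff_isUnit_det, isUnit_iff_ne_zero, not_ne_iff,
    Matrix.charpoly, ← Polynomial.coe_evalRingHom, RingHom.map_det]
  have : (evalRingHom μ).mapMatrix (charmatrix M) = algebraMap ℝ (Matrix (Fin 4) (Fin 4) ℝ) μ - M := by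
    ext i j
    by_cases h : i = j <;>
      simp [h, charmatrix_apply, Matrix.algebraMap_matrix_apply, Matrix.one_apply]
  rw [this]

open Matrix in
lemma M15_charpoly (φ : ℝ) :
    (M15 φ).charpoly = (X ^ 2 - C (1 + sin (2 * φ))) * (X ^ 2 - C (1 - sin (2 * φ))) := by
  have h : (M15 φ).charmatrix =
      !![X, -C (cos φ), -C (sin φ), 0;
         -C (cos φ), X, 0, -C (sin φ);
         -C (sin φ), 0, X, -C (cos φ);
         0, -C (sin φ), -C (cos φ), X] := by
    ext i j
    fin_cases i <;> fin_cases j <;>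
      simp [charmatrix_apply, M15, Matrix.one_apply]
  rw [Matrix.charpoly, h, Matrix.det_succ_row_zero]
  simp [Fin.sum_univ_succ, det_fin_three, show ((1:Fin 4).succAbove 2) = 3 from rfl,
    show ((2:Fin 4).succAbove 2) = 3 from rfl, sin_two_mul, C_add, C_sub, C_mul, C_1]
  have h1 : (C (sin φ))^2 + (C (cos φ))^2 = 1 := by
    rw [← C_pow, ← C_pow, ← C_add, sin_sq_add_cos_sq, C_1]
  have h2 : (C 2 : ℝ[X]) = 2 := map_ofNat C 2
  rw [h2]
  linear_combination ((C (sin φ))^2 + (C (cos φ))^2 + 1 - 2*X^2) * h1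

lemma M15_spectrum (φ : ℝ) :
    spectrum ℝ (M15 φ) =
      ({cos φ + sin φ, -(cos φ + sin φ), cos φ - sin φ, -(cos φ - sin φ)} : Set ℝ) := by
  ext μ
  rw [mem_spectrum_iff_charpoly_eval, M15_charpoly]
  have hA : 1 + sin (2 * φ) = (cos φ + sin φ) ^ 2 := by
    rw [sin_two_mul]; linear_combination -(sin_sq_add_cos_sq φ)
  have hB : 1 - sin (2 * φ) = (cos φ - sin φ) ^ 2 := by
    rw [sin_two_mul]; linear_combination -(sin_sq_add_cos_sq φ)
  simp only [eval_mul, eval_sub, eval_pow, eval_X, eval_C, hA, hB, mul_eq_zero,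
    sub_eq_zero, sq_eq_sq_iff_eq_or_eq_neg, Set.mem_insert_iff, Set.mem_singleton_iff]
  tauto

theorem stmt15 (φ : ℝ) :
    (M15 φ).charpoly = (X ^ 2 - C (1 + sin (2 * φ))) * (X ^ 2 - C (1 - sin (2 * φ))) ∧
    spectrum ℝ (M15 φ) =
      ({cos φ + sin φ, -(cos φ + sin φ), cos φ - sin φ, -(cos φ - sin φ)} : Set ℝ) ∧
    ∃ φ₁ φ₂ : ℝ, spectrum ℝ (M15 φ₁) ≠ spectrum ℝ (M15 φ₂) := by
  refine ⟨M15_charpoly φ, M15_spectrum φ, 0, π/4, ?_⟩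
  rw [M15_spectrum, M15_spectrum]
  intro h
  have h0 : (0 : ℝ) ∈ ({cos (π/4) + sin (π/4), -(cos (π/4) + sin (π/4)),
      cos (π/4) - sin (π/4), -(cos (π/4) - sin (π/4))} : Set ℝ) := by
    simp [cos_pi_div_four, sin_pi_div_four]
  rw [← h] at h0
  simp only [Set.mem_insert_iff, Set.mem_singleton_iff, cos_zero, sin_zero] at h0
  norm_num at h0
end

section
/- For every φ ∈ ℝ, the real 6×6 matrix M(φ) with rows (0, √2 cos φ, 0, 0, 0, 0), (√2 cos φ, 0, √2 cos φ, sin φ, 0, 0), (0, √2 cos φ, 0, 0, √2 sin φ, 0), (0, sin φ, 0, 0, cos φ, 0), (0, 0, √2 sin φ, cos φ, 0, √2 sin φ), (0, 0, 0, 0, √2 sin φ, 0) has characteristic polynomial X²(X² − 1)(X² − 4); in particular its eigenvalues are 0 (multiplicity 2), ±1, and ±2, independent of φ. -/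
/-!
By cofactor expansion, every matrix with the sparsity pattern of `M17 φ` has an even
characteristic polynomial whose `X⁴` and `X²` coefficients are quadratic and quartic in the
entries. Along `a = √2 cos φ, b = sin φ, c = √2 sin φ, d = cos φ` the identity
`sin² φ + cos² φ = 1` makes them `-5` and `4(sin² φ + cos² φ)² = 4`, independent of `φ`.
-/

open Polynomial Real

noncomputable def M17 (φ : ℝ) : Matrix (Fin 6) (Fin 6) ℝ :=
  !![0, Real.sqrt 2 * cos φ, 0, 0, 0, 0;
     Real.sqrt 2 * cos φ, 0, Real.sqrt 2 * cos φ, sin φ, 0, 0;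
     0, Real.sqrt 2 * cos φ, 0, 0, Real.sqrt 2 * sin φ, 0;
     0, sin φ, 0, 0, cos φ, 0;
     0, 0, Real.sqrt 2 * sin φ, cos φ, 0, Real.sqrt 2 * sin φ;
     0, 0, 0, 0, Real.sqrt 2 * sin φ, 0]

def shapeOperatorMatrix {R : Type*} [Zero R] (a b c d : R) : Matrix (Fin 6) (Fin 6) R :=
  !![0, a, 0, 0, 0, 0;
     a, 0, a, b, 0, 0;
     0, a, 0, 0, c, 0;
     0, b, 0, 0, d, 0;
     0, 0, c, d, 0, c;
     0, 0, 0, 0, c, 0]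

set_option maxHeartbeats 1000000 in
theorem charpoly_shapeOperatorMatrix {R : Type*} [CommRing R] (a b c d : R) :
    (shapeOperatorMatrix a b c d).charpoly =
      X ^ 6 - C (2 * a ^ 2 + b ^ 2 + 2 * c ^ 2 + d ^ 2) * X ^ 4
        + C (2 * b ^ 2 * c ^ 2 - 2 * a * b * c * d + 2 * a ^ 2 * d ^ 2 + 3 * a ^ 2 * c ^ 2)
          * X ^ 2 := by
  simp [Matrix.charpoly, Matrix.charmatrix, shapeOperatorMatrix, Matrix.det_succ_row_zero,
    Fin.sum_univ_succ, Fin.succAbove, map_ofNat]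
  ring

theorem M17_eq_shapeOperatorMatrix (φ : ℝ) :
    M17 φ = shapeOperatorMatrix (√2 * cos φ) (sin φ) (√2 * sin φ) (cos φ) :=
  rfl

theorem charpoly_M17 (φ : ℝ) : (M17 φ).charpoly = X ^ 2 * (X ^ 2 - 1) * (X ^ 2 - 4) := by
  have hsqrt : √2 ^ 2 = 2 := sq_sqrt zero_le_two
  have hpyth : sin φ ^ 2 + cos φ ^ 2 = 1 := sin_sq_add_cos_sq φ
  have hX4 : 2 * (√2 * cos φ) ^ 2 + sin φ ^ 2 + 2 * (√2 * sin φ) ^ 2 + cos φ ^ 2 = 5 := by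
    linear_combination (2 * cos φ ^ 2 + 2 * sin φ ^ 2) * hsqrt + 5 * hpyth
  have hX2 : 2 * sin φ ^ 2 * (√2 * sin φ) ^ 2 - 2 * (√2 * cos φ) * sin φ * (√2 * sin φ) * cos φ
      + 2 * (√2 * cos φ) ^ 2 * cos φ ^ 2 + 3 * (√2 * cos φ) ^ 2 * (√2 * sin φ) ^ 2 = 4 := by
    linear_combination (2 * sin φ ^ 4 - 2 * sin φ ^ 2 * cos φ ^ 2 + 2 * cos φ ^ 4
      + 3 * sin φ ^ 2 * cos φ ^ 2 * (√2 ^ 2 + 2)) * hsqrt + 4 * (sin φ ^ 2 + cos φ ^ 2 + 1) * hpyth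
  rw [M17_eq_shapeOperatorMatrix, charpoly_shapeOperatorMatrix, hX4, hX2, map_ofNat, map_ofNat]
  ring

theorem isRoot_X_sq_mul_X_sq_sub_one_mul_X_sq_sub_four_iff (x : ℝ) :
    (X ^ 2 * (X ^ 2 - 1) * (X ^ 2 - 4) : ℝ[X]).IsRoot x ↔
      x ∈ ({0, 1, -1, 2, -2} : Set ℝ) := by
  have h4 : (4 : ℝ) = 2 ^ 2 := by norm_num
  simp [h4, sub_eq_zero, sq_eq_sq_iff_eq_or_eq_neg, or_assoc]

theorem stmt17 (φ : ℝ) :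
    (M17 φ).charpoly = X ^ 2 * (X ^ 2 - 1) * (X ^ 2 - 4) ∧
    spectrum ℝ (M17 φ) = ({0, 1, -1, 2, -2} : Set ℝ) := by
  refine ⟨charpoly_M17 φ, Set.ext fun x => ?_⟩
  rw [Matrix.mem_spectrum_iff_isRoot_charpoly, charpoly_M17,
    isRoot_X_sq_mul_X_sq_sub_one_mul_X_sq_sub_four_iff]
end
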